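/- Under condition H1, there exist constants c₁, c₂ > 0 such that for all λ ∈ ℝ and all t ∈ (0,1], t ∫_ℝ (cos(λ t^{−1/α} u) − 1) m(u) du ≤ log c₁ − c₂ |λ|^α; equivalently, |exp(ψ_{α,t}(λ))| ≤ c₁ e^{−c₂|λ|^α} for all λ ∈ ℝ and t ∈ (0,1]. -/

import Mathlib

/-!
Since `1 - cos ≥ 0`, the real part of `ψ_{α,t}(λ)` is bounded above by minus the contribution of
the jumps `u` of size about `1 / |b|`, `b = λ t^{-1/α}`, on a side where the limit of
`|u|^{α+1} m(u)` is positive. There `m(u) ≳ |u|^{-(α+1)}`, so this contribution is `≳ |b|^α` once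
`|b|` is large, and the scaling `t |λ t^{-1/α}|^α = |λ|^α` makes the bound uniform in
`t ∈ (0,1]`; small `|λ|` are absorbed into `c₁`.
-/

open MeasureTheory Real Filter Set Topology

/-- The characteristic exponent `ψ_{α,t}(λ)` of the rescaled locally stable process. -/
noncomputable def psiT (m : ℝ → ℝ) (α t lam : ℝ) : ℂ :=
  (t : ℂ) * ∫ u : ℝ,
    (Complex.exp (Complex.I * ((lam * t ^ (-1 / α) * u : ℝ) : ℂ)) - 1 -
      Complex.I * ((lam * t ^ (-1 / α) * u : ℝ) : ℂ) *
        (if |u| ≤ t ^ (1 / α) then (1 : ℂ) else 0)) * ((m u : ℝ) : ℂ)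

noncomputable def levyIntegrand (m : ℝ → ℝ) (b T u : ℝ) : ℂ :=
  (Complex.exp (Complex.I * ((b * u : ℝ) : ℂ)) - 1 -
    Complex.I * ((b * u : ℝ) : ℂ) * (if |u| ≤ T then (1 : ℂ) else 0)) * ((m u : ℝ) : ℂ)

lemma psiT_eq_integral_levyIntegrand (m : ℝ → ℝ) (α t lam : ℝ) :
    psiT m α t lam = t * ∫ u, levyIntegrand m (lam * t ^ (-1 / α)) (t ^ (1 / α)) u := by
  simp only [psiT, levyIntegrand, mul_assoc]

lemma norm_exp_I_mul_ofReal_sub_one_le_two (x : ℝ) :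
    ‖Complex.exp (Complex.I * x) - 1‖ ≤ 2 := by
  calc ‖Complex.exp (Complex.I * x) - 1‖ ≤ ‖Complex.exp (Complex.I * x)‖ + ‖(1 : ℂ)‖ :=
        norm_sub_le _ _
    _ = 2 := by rw [Complex.norm_exp_I_mul_ofReal, norm_one]; norm_num

lemma norm_exp_I_mul_ofReal_sub_one_sub_le (x : ℝ) :
    ‖Complex.exp (Complex.I * x) - 1 - Complex.I * x‖ ≤ 2 * x ^ 2 := by
  have hIx : ‖Complex.I * x‖ = |x| := by simp
  rcases le_or_gt |x| 1 with hx | hx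
  · calc _ ≤ ‖Complex.I * x‖ ^ 2 := Complex.norm_exp_sub_one_sub_id_le (hIx ▸ hx)
      _ ≤ 2 * x ^ 2 := by rw [hIx, sq_abs]; nlinarith [sq_nonneg x]
  · calc _ ≤ ‖Complex.exp (Complex.I * x) - 1‖ + ‖Complex.I * x‖ := norm_sub_le _ _
      _ ≤ |x| + |x| := by
        rw [hIx]; gcongr; exact Real.norm_exp_I_mul_ofReal_sub_one_le
      _ ≤ 2 * x ^ 2 := by rw [← sq_abs]; nlinarith

lemma norm_levyIntegrand_le {m : ℝ → ℝ} (hm_nonneg : ∀ u, 0 ≤ m u) (b : ℝ) {T : ℝ}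
    (hT0 : 0 < T) (hT1 : T ≤ 1) (u : ℝ) :
    ‖levyIntegrand m b T u‖ ≤ (2 * b ^ 2 + 2 / T ^ 2) * (min 1 (u ^ 2) * m u) := by
  have hm := hm_nonneg u
  rw [levyIntegrand, norm_mul, Complex.norm_real, Real.norm_of_nonneg hm, ← mul_assoc]
  refine mul_le_mul_of_nonneg_right ?_ hm
  split_ifs with hu
  · have hu2 : u ^ 2 ≤ 1 := by nlinarith [sq_abs u, abs_nonneg u]
    rw [mul_one, min_eq_right hu2]
    calc _ ≤ 2 * (b * u) ^ 2 := norm_exp_I_mul_ofReal_sub_one_sub_le _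
      _ ≤ (2 * b ^ 2 + 2 / T ^ 2) * u ^ 2 := by
        rw [mul_pow]; nlinarith [sq_nonneg u, div_nonneg zero_le_two (sq_nonneg T)]
  · have hT2 : T ^ 2 ≤ min 1 (u ^ 2) :=
      le_min (pow_le_one₀ hT0.le hT1) (by nlinarith [sq_abs u, not_le.mp hu])
    rw [mul_zero, sub_zero]
    calc _ ≤ 2 := norm_exp_I_mul_ofReal_sub_one_le_two _
      _ = 2 / T ^ 2 * T ^ 2 := by field_simp
      _ ≤ (2 * b ^ 2 + 2 / T ^ 2) * min 1 (u ^ 2) := by gcongr; nlinarith [sq_nonneg b]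

lemma integrable_levyIntegrand {m : ℝ → ℝ} (hm_meas : Measurable m) (hm_nonneg : ∀ u, 0 ≤ m u)
    (hm_int : Integrable (fun u => min 1 (u ^ 2) * m u)) (b : ℝ) {T : ℝ}
    (hT0 : 0 < T) (hT1 : T ≤ 1) :
    Integrable (levyIntegrand m b T) := by
  refine (hm_int.const_mul _).mono' ?_
    (Eventually.of_forall (norm_levyIntegrand_le hm_nonneg b hT0 hT1))
  have hind : Measurable fun u : ℝ => if |u| ≤ T then (1 : ℂ) else 0 :=
    Measurable.ite (measurableSet_le measurable_abs measurable_const)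
      measurable_const measurable_const
  unfold levyIntegrand
  fun_prop

lemma re_levyIntegrand (m : ℝ → ℝ) (b T u : ℝ) :
    (levyIntegrand m b T u).re = (Real.cos (b * u) - 1) * m u := by
  unfold levyIntegrand
  split_ifs <;> simp [Complex.mul_re, Complex.exp_re]

lemma re_psiT {α : ℝ} (hα : 0 ≤ α) {m : ℝ → ℝ} (hm_meas : Measurable m) (hm_nonneg : ∀ u, 0 ≤ m u)
    (hm_int : Integrable (fun u => min 1 (u ^ 2) * m u)) {t : ℝ} (ht : t ∈ Ioc 0 1) (lam : ℝ) :
    (psiT m α t lam).re = t * ∫ u, (Real.cos (lam * t ^ (-1 / α) * u) - 1) * m u := by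
  have hint := integrable_levyIntegrand hm_meas hm_nonneg hm_int (lam * t ^ (-1 / α))
    (rpow_pos_of_pos ht.1 (1 / α)) (rpow_le_one ht.1.le ht.2 (by positivity))
  rw [psiT_eq_integral_levyIntegrand, Complex.re_ofReal_mul, ← RCLike.re_to_complex,
    ← integral_re hint]
  simp only [RCLike.re_to_complex, re_levyIntegrand]

lemma one_sub_cos_mul_le (b u : ℝ) : 1 - Real.cos (b * u) ≤ (2 + b ^ 2) * min 1 (u ^ 2) := by
  rcases le_total (u ^ 2) 1 with hu | hu
  · rw [min_eq_right hu]
    have := one_sub_sq_div_two_le_cos (x := b * u)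
    nlinarith [mul_nonneg (sq_nonneg b) (sq_nonneg u)]
  · rw [min_eq_left hu]
    nlinarith [neg_one_le_cos (b * u), sq_nonneg b]

lemma integrable_one_sub_cos_mul {m : ℝ → ℝ} (hm_meas : Measurable m) (hm_nonneg : ∀ u, 0 ≤ m u)
    (hm_int : Integrable (fun u => min 1 (u ^ 2) * m u)) (b : ℝ) :
    Integrable (fun u => (1 - Real.cos (b * u)) * m u) := by
  refine (hm_int.const_mul (2 + b ^ 2)).mono' (by fun_prop) (Eventually.of_forall fun u => ?_)
  rw [Real.norm_of_nonneg (mul_nonneg (by linarith [cos_le_one (b * u)]) (hm_nonneg u)),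
    ← mul_assoc]
  exact mul_le_mul_of_nonneg_right (one_sub_cos_mul_le b u) (hm_nonneg u)

lemma one_le_one_sub_cos_mul {b u : ℝ} (hb : b ≠ 0) (hu : u ∈ Icc (π / (2 * |b|)) (π / |b|)) :
    1 ≤ 1 - Real.cos (b * u) := by
  have hb' : 0 < |b| := abs_pos.mpr hb
  have hu0 : 0 ≤ u := le_trans (by positivity) hu.1
  have h1 : π / 2 ≤ |b| * u := by
    calc π / 2 = |b| * (π / (2 * |b|)) := by field_simp
      _ ≤ |b| * u := by gcongr; exact hu.1
  have h2 : |b| * u ≤ π := by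
    calc |b| * u ≤ |b| * (π / |b|) := by gcongr; exact hu.2
      _ = π := by field_simp
  rw [← cos_abs, abs_mul, abs_of_nonneg hu0]
  linarith [cos_nonpos_of_pi_div_two_le_of_le h1 (by linarith [pi_pos])]

lemma integral_one_sub_cos_mul_ge {m : ℝ → ℝ} {α c δ b : ℝ} (hα : 0 ≤ α + 1) (hc : 0 ≤ c)
    (hδ : 0 < δ) (hm_nonneg : ∀ u, 0 ≤ m u)
    (hint : Integrable (fun u => (1 - Real.cos (b * u)) * m u))
    (hlow : ∀ u ∈ Ioo 0 δ, c * u ^ (-(α + 1)) ≤ m u) (hb : π / δ < |b|) :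
    c / (2 * π ^ α) * |b| ^ α ≤ ∫ u, (1 - Real.cos (b * u)) * m u := by
  set a := |b|
  have ha : 0 < a := lt_trans (by positivity) hb
  have hb0 : b ≠ 0 := abs_pos.mp ha
  have hsub : Icc (π / (2 * a)) (π / a) ⊆ Ioo 0 δ := fun u hu =>
    ⟨lt_of_lt_of_le (by positivity) hu.1,
      hu.2.trans_lt ((div_lt_iff₀ ha).mpr (by rwa [div_lt_iff₀ hδ, mul_comm] at hb))⟩
  have hpt : ∀ u ∈ Icc (π / (2 * a)) (π / a),
      c * (π / a) ^ (-(α + 1)) ≤ (1 - Real.cos (b * u)) * m u := by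
    intro u hu
    have hu0 : 0 < u := (hsub hu).1
    calc c * (π / a) ^ (-(α + 1)) ≤ c * u ^ (-(α + 1)) := 
          mul_le_mul_of_nonneg_left (rpow_le_rpow_of_nonpos hu0 hu.2 (by linarith)) hc
      _ ≤ m u := hlow u (hsub hu)
      _ ≤ (1 - Real.cos (b * u)) * m u :=
          le_mul_of_one_le_left (hm_nonneg u) (one_le_one_sub_cos_mul hb0 hu)
  have hset := setIntegral_ge_of_const_le_real measurableSet_Icc
    (by simp [Real.volume_Icc]) hpt hint.integrableOn
  have hfull := setIntegral_le_integral (s := Icc (π / (2 * a)) (π / a)) hint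
    (Eventually.of_forall fun u =>
      mul_nonneg (by linarith [cos_le_one (b * u)]) (hm_nonneg u))
  have hlen : volume.real (Icc (π / (2 * a)) (π / a)) = π / (2 * a) := by
    rw [Real.volume_real_Icc_of_le (by gcongr; linarith)]; field_simp; ring
  have hconst : c * (π / a) ^ (-(α + 1)) * (π / (2 * a)) = c / (2 * π ^ α) * a ^ α := by
    rw [rpow_neg (by positivity), div_rpow pi_pos.le ha.le, rpow_add_one ha.ne',
      rpow_add_one pi_ne_zero]
    have : 0 < π ^ α := rpow_pos_of_pos pi_pos α
    have : 0 < a ^ α := rpow_pos_of_pos ha α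
    field_simp
  rw [hlen, hconst] at hset
  exact hset.trans hfull

lemma exists_forall_mem_Ioo_mul_rpow_le {m : ℝ → ℝ} {α C : ℝ} (hC : 0 < C)
    (h : Tendsto (fun u => u ^ (α + 1) * m u) (𝓝[>] 0) (𝓝 C)) :
    ∃ δ > 0, ∀ u ∈ Ioo 0 δ, C / 2 * u ^ (-(α + 1)) ≤ m u := by
  obtain ⟨δ, hδ, hsub⟩ :=
    mem_nhdsGT_iff_exists_Ioo_subset.mp (h.eventually_const_lt (half_lt_self hC))
  refine ⟨δ, hδ, fun u hu => ?_⟩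
  have hpos : 0 < u ^ (α + 1) := rpow_pos_of_pos hu.1 _
  rw [rpow_neg hu.1.le, ← div_eq_mul_inv, div_le_iff₀ hpos, mul_comm]
  exact (hsub hu).le

lemma exists_integral_one_sub_cos_mul_ge_of_tendsto_nhdsGT {m : ℝ → ℝ} {α C : ℝ}
    (hα : 0 ≤ α + 1) (hC : 0 < C) (hm_meas : Measurable m) (hm_nonneg : ∀ u, 0 ≤ m u)
    (hm_int : Integrable (fun u => min 1 (u ^ 2) * m u))
    (hlim : Tendsto (fun u => u ^ (α + 1) * m u) (𝓝[>] 0) (𝓝 C)) :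
    ∃ c > 0, ∃ δ > 0, ∀ b, π / δ < |b| → c * |b| ^ α ≤ ∫ u, (1 - Real.cos (b * u)) * m u := by
  obtain ⟨δ, hδ, hlow⟩ := exists_forall_mem_Ioo_mul_rpow_le hC hlim
  exact ⟨C / 2 / (2 * π ^ α), by positivity, δ, hδ, fun b hb =>
    integral_one_sub_cos_mul_ge hα (by positivity) hδ hm_nonneg
      (integrable_one_sub_cos_mul hm_meas hm_nonneg hm_int b) hlow hb⟩

lemma exists_integral_one_sub_cos_mul_ge_of_tendsto_nhdsLT {m : ℝ → ℝ} {α C : ℝ}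
    (hα : 0 ≤ α + 1) (hC : 0 < C) (hm_meas : Measurable m) (hm_nonneg : ∀ u, 0 ≤ m u)
    (hm_int : Integrable (fun u => min 1 (u ^ 2) * m u))
    (hlim : Tendsto (fun u => |u| ^ (α + 1) * m u) (𝓝[<] 0) (𝓝 C)) :
    ∃ c > 0, ∃ δ > 0, ∀ b, π / δ < |b| → c * |b| ^ α ≤ ∫ u, (1 - Real.cos (b * u)) * m u := by
  have hlim' : Tendsto (fun u => u ^ (α + 1) * m (-u)) (𝓝[>] 0) (𝓝 C) := by
    refine (hlim.comp (neg_zero (G := ℝ) ▸ tendsto_neg_nhdsGT_neg)).congr' ?_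
    filter_upwards [self_mem_nhdsWithin] with u (hu : 0 < u)
    simp [abs_of_pos hu]
  obtain ⟨c, hc, δ, hδ, hbound⟩ := exists_integral_one_sub_cos_mul_ge_of_tendsto_nhdsGT hα hC
    (hm_meas.comp measurable_neg) (fun u => hm_nonneg (-u)) (by simpa using hm_int.comp_neg) hlim'
  refine ⟨c, hc, δ, hδ, fun b hb => (hbound b hb).trans_eq ?_⟩
  simpa [mul_neg] using integral_neg_eq_self (fun u => (1 - Real.cos (b * u)) * m u) volume

lemma mul_abs_mul_rpow_neg_one_div_rpow {α t : ℝ} (hα : α ≠ 0) (ht : 0 < t) (lam : ℝ) :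
    t * |lam * t ^ (-1 / α)| ^ α = |lam| ^ α := by
  rw [abs_mul, abs_of_pos (rpow_pos_of_pos ht _), mul_rpow (abs_nonneg _) (rpow_pos_of_pos ht _).le,
    ← rpow_mul ht.le, div_mul_cancel₀ _ hα, rpow_neg_one]
  field_simp

lemma integral_cos_mul_rpow_sub_one_le {m : ℝ → ℝ} {α c Λ : ℝ} (hα : 0 < α) (hc : 0 ≤ c)
    (hΛ : 0 ≤ Λ) (hm_nonneg : ∀ u, 0 ≤ m u)
    (hbound : ∀ b, Λ < |b| → c * |b| ^ α ≤ ∫ u, (1 - Real.cos (b * u)) * m u)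
    {t : ℝ} (ht : t ∈ Ioc 0 1) (lam : ℝ) :
    t * ∫ u, (Real.cos (lam * t ^ (-1 / α) * u) - 1) * m u ≤ c * Λ ^ α - c * |lam| ^ α := by
  set b := lam * t ^ (-1 / α)
  have hflip : t * ∫ u, (Real.cos (b * u) - 1) * m u =
      -(t * ∫ u, (1 - Real.cos (b * u)) * m u) := by
    rw [← mul_neg, ← integral_neg]; congr 2 with u; ring
  have hnonneg : 0 ≤ t * ∫ u, (1 - Real.cos (b * u)) * m u :=
    mul_nonneg ht.1.le (integral_nonneg fun u =>
      mul_nonneg (by linarith [cos_le_one (b * u)]) (hm_nonneg u))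
  rw [hflip]
  rcases le_or_gt |lam| Λ with hsmall | hbig
  · have : c * |lam| ^ α ≤ c * Λ ^ α := by gcongr
    linarith
  · have hlam_le : |lam| ≤ |b| := by
      rw [abs_mul, abs_of_pos (rpow_pos_of_pos ht.1 _)]
      exact le_mul_of_one_le_right (abs_nonneg _)
        (one_le_rpow_of_pos_of_le_one_of_nonpos ht.1 ht.2 (by rw [neg_div]; simp [hα.le]))
    have hscaled : c * |lam| ^ α ≤ t * ∫ u, (1 - Real.cos (b * u)) * m u := by
      calc c * |lam| ^ α = t * (c * |b| ^ α) := by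
            rw [← mul_abs_mul_rpow_neg_one_div_rpow hα.ne' ht.1 lam]; ring
        _ ≤ _ := mul_le_mul_of_nonneg_left (hbound b (hbig.trans_le hlam_le)) ht.1.le
    have : 0 ≤ c * Λ ^ α := by positivity
    linarith

theorem statement3_general (α Cp Cm : ℝ) (hα : α ∈ Set.Ioo (0 : ℝ) 2)
    (hC : 0 < Cp + Cm)
    (m : ℝ → ℝ) (hm_meas : Measurable m) (hm_nonneg : ∀ u, 0 ≤ m u)
    (hm_int : Integrable (fun u => min 1 (u ^ 2) * m u))
    (hlimp : Tendsto (fun u => u ^ (α + 1) * m u) (𝓝[>] (0 : ℝ)) (𝓝 Cp))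
    (hlimm : Tendsto (fun u => |u| ^ (α + 1) * m u) (𝓝[<] (0 : ℝ)) (𝓝 Cm)) :
    ∃ c₁ > (0 : ℝ), ∃ c₂ > (0 : ℝ), ∀ lam : ℝ, ∀ t ∈ Set.Ioc (0 : ℝ) 1,
      (t * ∫ u : ℝ, (Real.cos (lam * t ^ (-1 / α) * u) - 1) * m u
          ≤ Real.log c₁ - c₂ * |lam| ^ α) ∧
      ‖Complex.exp (psiT m α t lam)‖ ≤ c₁ * Real.exp (-c₂ * |lam| ^ α) := by
  have hα1 : 0 ≤ α + 1 := by linarith [hα.1]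
  obtain ⟨c, hc, δ, hδ, hbound⟩ :
      ∃ c > 0, ∃ δ > 0, ∀ b, π / δ < |b| → c * |b| ^ α ≤ ∫ u, (1 - Real.cos (b * u)) * m u := by
    rcases lt_or_ge 0 Cp with hCp | hCp
    · exact exists_integral_one_sub_cos_mul_ge_of_tendsto_nhdsGT hα1 hCp hm_meas hm_nonneg
        hm_int hlimp
    · exact exists_integral_one_sub_cos_mul_ge_of_tendsto_nhdsLT hα1 (by linarith) hm_meas
        hm_nonneg hm_int hlimm
  set c₁ := exp (c * (π / δ) ^ α) with hc₁
  refine ⟨c₁, exp_pos _, c, hc, fun lam t ht => ?_⟩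
  have key : t * ∫ u, (Real.cos (lam * t ^ (-1 / α) * u) - 1) * m u
      ≤ log c₁ - c * |lam| ^ α := by
    rw [hc₁, log_exp]
    exact integral_cos_mul_rpow_sub_one_le hα.1 hc.le (by positivity) hm_nonneg hbound ht lam
  refine ⟨key, ?_⟩
  rw [Complex.norm_exp, re_psiT hα.1.le hm_meas hm_nonneg hm_int ht]
  calc _ ≤ exp (log c₁ - c * |lam| ^ α) := exp_le_exp.mpr key
    _ = c₁ * exp (-c * |lam| ^ α) := by
      rw [exp_sub, exp_log (exp_pos _), neg_mul, exp_neg, div_eq_mul_inv]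

/-- Under condition H1, there exist `c₁, c₂ > 0` such that for all `λ ∈ ℝ` and `t ∈ (0,1]`,
`t ∫ (cos(λ t^{-1/α} u) - 1) m(u) du ≤ log c₁ - c₂ |λ|^α`; equivalently
`|exp (ψ_{α,t}(λ))| ≤ c₁ exp (-c₂ |λ|^α)`. -/
theorem statement3 (α Cp Cm : ℝ) (hα : α ∈ Set.Ioo (0 : ℝ) 2)
    (hCp0 : 0 ≤ Cp) (hCm0 : 0 ≤ Cm) (hC : 0 < Cp + Cm)
    (m : ℝ → ℝ) (hm_meas : Measurable m) (hm_nonneg : ∀ u, 0 ≤ m u)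
    (hm_int : Integrable (fun u => min 1 (u ^ 2) * m u))
    (hlimp : Tendsto (fun u => u ^ (α + 1) * m u) (𝓝[>] (0 : ℝ)) (𝓝 Cp))
    (hlimm : Tendsto (fun u => |u| ^ (α + 1) * m u) (𝓝[<] (0 : ℝ)) (𝓝 Cm)) :
    ∃ c₁ > (0 : ℝ), ∃ c₂ > (0 : ℝ), ∀ lam : ℝ, ∀ t ∈ Set.Ioc (0 : ℝ) 1,
      (t * ∫ u : ℝ, (Real.cos (lam * t ^ (-1 / α) * u) - 1) * m u
          ≤ Real.log c₁ - c₂ * |lam| ^ α) ∧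
      ‖Complex.exp (psiT m α t lam)‖ ≤ c₁ * Real.exp (-c₂ * |lam| ^ α) :=
  statement3_general α Cp Cm hα hC m hm_meas hm_nonneg hm_int hlimp hlimm
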